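/- Let τ^Q be the tetrahedron with vertices A=(0,0,0), B=(1,0,0), C=(1/2, √2/4, 0), D=(1/2, 0, 1/2). The edge AB is a longest edge of τ^Q; letting M=(1/2,0,0), each of the sub-tetrahedra A M C D and M B C D is similar to the tetrahedron τ^H with vertices (0,0,0), (1,0,0), (1/2, 1/2, 0), (1/2, 1/2, 1/2). Consequently the longest-edge bisection dynamics on the similarity classes of τ^H, τ^P, τ^Q forms a cycle of length three. -/

import Mathlib

/-!
The similarity `x ↦ √2 · R x`, with `R` the orthogonal matrix of rows `(1, 0, 1)/√2`, `(1, 0, -1)/√2`,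
`(0, 1, 0)`, carries `A, M, C, D` to `0, (1/2, 1/2, 0), (1/2, 1/2, 1/2), (1, 0, 0)`. The other
child `M B C D` is the mirror image of `A M C D` in the bisecting plane `x₀ = 1/2`, and
similarity is transitive. That `AB` is a longest edge is a comparison of the six squared edge
lengths `1, 1/2, 1/2, 3/8, 3/8, 3/8`.
-/

/-- Euclidean distance between two points of `ℝ³` (represented as `Fin 3 → ℝ`). -/
noncomputable def dist3 (x y : Fin 3 → ℝ) : ℝ :=
  Real.sqrt ((x 0 - y 0) ^ 2 + (x 1 - y 1) ^ 2 + (x 2 - y 2) ^ 2)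

/-- Two subsets of `ℝ³` are similar if a similarity transformation `x ↦ b + λ R x`
with `λ > 0` and `R ∈ O(3)` maps one onto the other. -/
def SimilarSet (S T : Set (Fin 3 → ℝ)) : Prop :=
  ∃ (lam : ℝ) (R : Matrix (Fin 3) (Fin 3) ℝ) (b : Fin 3 → ℝ),
    0 < lam ∧ R ∈ Matrix.orthogonalGroup (Fin 3) ℝ ∧
    (fun x => b + lam • R.mulVec x) '' S = T

open Matrix

theorem dist3_le_dist3_iff (x y u v : Fin 3 → ℝ) :
    dist3 x y ≤ dist3 u v ↔
      (x 0 - y 0) ^ 2 + (x 1 - y 1) ^ 2 + (x 2 - y 2) ^ 2 ≤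
        (u 0 - v 0) ^ 2 + (u 1 - v 1) ^ 2 + (u 2 - v 2) ^ 2 :=
  Real.sqrt_le_sqrt_iff (by positivity)

theorem SimilarSet.trans {S T U : Set (Fin 3 → ℝ)} (hST : SimilarSet S T)
    (hTU : SimilarSet T U) : SimilarSet S U := by
  obtain ⟨lam, R, b, hlam, hR, rfl⟩ := hST
  obtain ⟨mu, Q, c, hmu, hQ, rfl⟩ := hTU
  refine ⟨mu * lam, Q * R, c + mu • Q *ᵥ b, mul_pos hmu hlam, Submonoid.mul_mem _ hQ hR, ?_⟩
  rw [Set.image_image]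
  congr 1
  funext x
  simp only [mulVec_add, mulVec_smul, mulVec_mulVec, smul_add, smul_smul, add_assoc]

theorem similarSet_of_vertices {lam : ℝ} {R : Matrix (Fin 3) (Fin 3) ℝ} {b : Fin 3 → ℝ}
    (hlam : 0 < lam) (hR : R ∈ orthogonalGroup (Fin 3) ℝ) {p₀ p₁ p₂ p₃ q₀ q₁ q₂ q₃ : Fin 3 → ℝ}
    (h₀ : b + lam • R *ᵥ p₀ = q₀) (h₁ : b + lam • R *ᵥ p₁ = q₁)
    (h₂ : b + lam • R *ᵥ p₂ = q₂) (h₃ : b + lam • R *ᵥ p₃ = q₃) :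
    SimilarSet {p₀, p₁, p₂, p₃} {q₀, q₁, q₂, q₃} := by
  refine ⟨lam, R, b, hlam, hR, ?_⟩
  simp only [Set.image_insert_eq, Set.image_singleton, h₀, h₁, h₂, h₃]

theorem diagonal_mem_orthogonalGroup {n : Type*} [Fintype n] [DecidableEq n] {d : n → ℝ}
    (hd : ∀ i, d i * d i = 1) : diagonal d ∈ orthogonalGroup n ℝ := by
  rw [mem_orthogonalGroup_iff, diagonal_transpose, diagonal_mul_diagonal, ← diagonal_one]
  exact congrArg diagonal (funext hd)

theorem tauQ_AB_longest :
    ∀ x ∈ ({![0, 0, 0], ![1, 0, 0], ![1/2, √2 / 4, 0], ![1/2, 0, 1/2]} : Set (Fin 3 → ℝ)),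
    ∀ y ∈ ({![0, 0, 0], ![1, 0, 0], ![1/2, √2 / 4, 0], ![1/2, 0, 1/2]} : Set (Fin 3 → ℝ)),
      dist3 x y ≤ dist3 ![0, 0, 0] ![1, 0, 0] := by
  have hsqrt : √2 ^ 2 = 2 := Real.sq_sqrt zero_le_two
  intro x hx y hy
  rw [dist3_le_dist3_iff]
  simp only [Set.mem_insert_iff, Set.mem_singleton_iff] at hx hy
  rcases hx with rfl | rfl | rfl | rfl <;> rcases hy with rfl | rfl | rfl | rfl <;>
    norm_num [hsqrt, div_pow, cons_val_two, tail_cons, head_cons]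

noncomputable def tauQRotation : Matrix (Fin 3) (Fin 3) ℝ :=
  !![√2 / 2, 0, √2 / 2; √2 / 2, 0, -(√2 / 2); 0, 1, 0]

theorem tauQRotation_mem_orthogonalGroup : tauQRotation ∈ orthogonalGroup (Fin 3) ℝ := by
  rw [mem_orthogonalGroup_iff]
  ext i j
  fin_cases i <;> fin_cases j <;> simp [tauQRotation, mul_apply, Fin.sum_univ_three] <;>
    ring_nf <;> simp

theorem tauQ_child_AMCD_similar_tauH :
    SimilarSet {![0, 0, 0], ![1/2, 0, 0], ![1/2, √2 / 4, 0], ![1/2, 0, 1/2]}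
      {![0, 0, 0], ![1, 0, 0], ![1/2, 1/2, 0], ![1/2, 1/2, 1/2]} := by
  rw [Set.insert_comm (![1, 0, 0] : Fin 3 → ℝ), Set.pair_comm (![1, 0, 0] : Fin 3 → ℝ)]
  refine similarSet_of_vertices (b := 0) (Real.sqrt_pos.2 two_pos)
    tauQRotation_mem_orthogonalGroup ?_ ?_ ?_ ?_ <;>
  · ext i
    fin_cases i <;> simp [tauQRotation] <;> ring_nf <;> norm_num

theorem tauQ_child_MBCD_similar_AMCD :
    SimilarSet {![1/2, 0, 0], ![1, 0, 0], ![1/2, √2 / 4, 0], ![1/2, 0, 1/2]}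
      {![0, 0, 0], ![1/2, 0, 0], ![1/2, √2 / 4, 0], ![1/2, 0, 1/2]} := by
  rw [Set.insert_comm (![0, 0, 0] : Fin 3 → ℝ)]
  refine similarSet_of_vertices (lam := 1) (R := diagonal ![-1, 1, 1]) (b := ![1, 0, 0])
    one_pos (diagonal_mem_orthogonalGroup fun i => by fin_cases i <;> norm_num) ?_ ?_ ?_ ?_ <;>
  · ext i
    fin_cases i <;> norm_num [mulVec_diagonal, cons_val]

/-- LEB of τ^Q at the midpoint of its longest edge AB gives two children each similar to τ^H; hence LEB cycles τ^H → τ^P → τ^Q → τ^H, a cycle of length three on similarity classes. -/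
theorem tauQ_children_similar_tauH :
    let A : Fin 3 → ℝ := ![0, 0, 0]
    let B : Fin 3 → ℝ := ![1, 0, 0]
    let C : Fin 3 → ℝ := ![1/2, Real.sqrt 2 / 4, 0]
    let D : Fin 3 → ℝ := ![1/2, 0, 1/2]
    let M : Fin 3 → ℝ := ![1/2, 0, 0]
    (∀ x ∈ ({A, B, C, D} : Set (Fin 3 → ℝ)), ∀ y ∈ ({A, B, C, D} : Set (Fin 3 → ℝ)),
      dist3 x y ≤ dist3 A B) ∧
    SimilarSet ({A, M, C, D} : Set (Fin 3 → ℝ)) ({![0, 0, 0], ![1, 0, 0], ![1/2, 1/2, 0], ![1/2, 1/2, 1/2]} : Set (Fin 3 → ℝ)) ∧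
    SimilarSet ({M, B, C, D} : Set (Fin 3 → ℝ)) ({![0, 0, 0], ![1, 0, 0], ![1/2, 1/2, 0], ![1/2, 1/2, 1/2]} : Set (Fin 3 → ℝ)) :=
  ⟨tauQ_AB_longest, tauQ_child_AMCD_similar_tauH,
    tauQ_child_MBCD_similar_AMCD.trans tauQ_child_AMCD_similar_tauH⟩
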